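/- Let Si denote the sine integral, Si(z) = ∫₀^z (sin t)/t dt, and let arcsin denote the real inverse sine function. For every natural number k, the function F(x) = (1/2^{2k}) · ( −2^{2k} · √(1−x²) · x^{2k} / arcsin(x) + (−1)^{k+1} · (2k+1) · Si((2k+1) · arcsin(x)) + Σ_{n=1}^{k} (−1)^n · ((1−2n)²/(k+1−n)) · C(2k, k+n) · Si((2n−1) · arcsin(x)) ) satisfies F'(x) = x^{2k} / (arcsin(x))² for all x in the open interval (0, 1), where C(n,k) denotes the binomial coefficient. -/

import Mathlib

open Real

/-- The sine integral `Si(z) = ∫₀^z (sin t)/t dt`. -/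
noncomputable def Si (z : ℝ) : ℝ := ∫ t in (0:ℝ)..z, Real.sin t / t

open Finset

/-!
Put `θ = arcsin x` and `u θ = 4 ^ k * sin θ ^ (2k) * cos θ`, so that the function is
`4⁻ᵏ (-u θ / θ + S θ)` with `S = siSum k` the combination of sine integrals. Since
`d/dθ Si (c θ) = sin (c θ) / θ`, it is enough that `S' = u' / θ`: then `(-u / θ + S)' = u / θ²`,
and `dθ/dx = 1 / cos θ` turns this into `x ^ (2k) / θ²`.

The identity `S' = u' / θ` comes from `(2k+1) u = V'` for `V θ = 4 ^ k * sin θ ^ (2k+1)`. Expanding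
`(e^{iθ} - e^{-iθ}) ^ (2k+1)` by the binomial theorem gives
`V θ = ∑_{j ≤ k} (-1)^j C(2k+1, k+1+j) sin ((2j+1) θ)`; differentiating twice gives `u'`, and
`C(2k, m) (2k+1) = C(2k+1, m) (2k+1-m)` matches its coefficients with those of `S`.
-/

theorem intervalIntegrable_sin_div (a b : ℝ) :
    IntervalIntegrable (fun t => sin t / t) MeasureTheory.volume a b := by
  rw [intervalIntegrable_iff]
  refine MeasureTheory.Measure.integrableOn_of_bounded (M := 1) measure_Ioc_lt_top.ne
    (measurable_sin.div measurable_id).aestronglyMeasurable (MeasureTheory.ae_of_all _ fun t => ?_)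
  rw [norm_div, Real.norm_eq_abs, Real.norm_eq_abs]
  exact div_le_one_of_le₀ abs_sin_le_abs (abs_nonneg t)

theorem hasDerivAt_Si {y : ℝ} (hy : y ≠ 0) : HasDerivAt Si (sin y / y) y := by
  unfold Si
  exact intervalIntegral.integral_hasDerivAt_right (intervalIntegrable_sin_div 0 y)
    (measurable_sin.div measurable_id).stronglyMeasurable.stronglyMeasurableAtFilter
    (continuous_sin.continuousAt.div continuousAt_id hy)

theorem hasDerivAt_Si_const_mul (c : ℝ) {t : ℝ} (ht : t ≠ 0) :
    HasDerivAt (fun t => Si (c * t)) (sin (c * t) / t) t := by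
  rcases eq_or_ne c 0 with rfl | hc
  · simpa using hasDerivAt_const t (Si 0)
  · refine ((hasDerivAt_Si (mul_ne_zero hc ht)).comp t
      ((hasDerivAt_id' t).const_mul c)).congr_deriv ?_
    field_simp

theorem hasDerivAt_neg_div_add {u S : ℝ → ℝ} {u' t : ℝ} (hu : HasDerivAt u u' t)
    (hS : HasDerivAt S (u' / t) t) (ht : t ≠ 0) :
    HasDerivAt (fun t => -(u t / t) + S t) (u t / t ^ 2) t := by
  refine ((hu.div (hasDerivAt_id' t) ht).neg.add hS).congr_deriv ?_
  field_simp
  ring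

theorem two_mul_I_mul_sin_pow (n : ℕ) (t : ℝ) :
    (2 * Complex.I * sin t) ^ n =
      ∑ j ∈ range (n + 1),
        (((-1) ^ j * n.choose j : ℝ) : ℂ) * Complex.exp ((n - 2 * j : ℝ) * t * Complex.I) := by
  have h : 2 * Complex.I * sin t = -Complex.exp (-t * Complex.I) + Complex.exp (t * Complex.I) := by
    rw [Complex.ofReal_sin, mul_right_comm, Complex.two_sin]
    ring_nf
    rw [Complex.I_sq]
    ring
  rw [h, add_pow]
  refine sum_congr rfl fun j hj => ?_
  have hjn : j ≤ n := Nat.lt_succ_iff.mp (mem_range.mp hj)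
  have hexp : Complex.exp (-t * Complex.I) ^ j * Complex.exp (t * Complex.I) ^ (n - j) =
      Complex.exp ((n - 2 * j : ℝ) * t * Complex.I) := by
    rw [← Complex.exp_nat_mul, ← Complex.exp_nat_mul, ← Complex.exp_add]
    push_cast [Nat.cast_sub hjn]
    ring_nf
  rw [neg_pow]
  push_cast at hexp ⊢
  linear_combination ((-1) ^ j * n.choose j : ℂ) * hexp

theorem two_mul_neg_four_pow_mul_sin_pow_odd (k : ℕ) (t : ℝ) :
    2 * (-4) ^ k * sin t ^ (2 * k + 1) =
      ∑ j ∈ range (2 * k + 2),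
        (-1) ^ j * ((2 * k + 1).choose j : ℝ) * sin ((2 * k + 1 - 2 * j : ℝ) * t) := by
  have hpow : (2 * Complex.I * sin t) ^ (2 * k + 1) =
      ((2 * (-4) ^ k * sin t ^ (2 * k + 1) : ℝ) : ℂ) * Complex.I := by
    rw [mul_pow, mul_pow, pow_succ, pow_mul, pow_succ Complex.I, pow_mul, Complex.I_sq]
    push_cast
    rw [neg_pow (4 : ℂ)]
    ring
  have h := congrArg Complex.im (two_mul_I_mul_sin_pow (2 * k + 1) t)
  rw [hpow, Complex.mul_I_im, Complex.ofReal_re, Complex.im_sum] at h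
  rw [h]
  refine sum_congr rfl fun j _ => ?_
  rw [Complex.im_ofReal_mul, ← Complex.ofReal_mul, Complex.exp_ofReal_mul_I_im]
  push_cast
  ring_nf

theorem four_pow_mul_sin_pow_odd (k : ℕ) (t : ℝ) :
    4 ^ k * sin t ^ (2 * k + 1) =
      ∑ j ∈ range (k + 1),
        (-1) ^ j * ((2 * k + 1).choose (k + 1 + j) : ℝ) * sin ((2 * j + 1) * t) := by
  set f : ℕ → ℝ := fun j =>
    (-1) ^ j * ((2 * k + 1).choose j : ℝ) * sin ((2 * k + 1 - 2 * j : ℝ) * t)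
  set g : ℕ → ℝ := fun j => (-1) ^ j * ((2 * k + 1).choose (k + 1 + j) : ℝ) * sin ((2 * j + 1) * t)
  -- the terms `j` and `2k+1-j` of the binomial expansion coincide
  have hlow : ∀ j ∈ range (k + 1), f (k + 1 - 1 - j) = (-1) ^ k * g j := by
    intro j hj
    have hjk : j ≤ k := Nat.lt_succ_iff.mp (mem_range.mp hj)
    have hsign : (-1 : ℝ) ^ (k - j) = (-1) ^ k * (-1) ^ j := by
      rw [← pow_add, show k + j = k - j + 2 * j by omega, pow_add, pow_mul, neg_one_sq, one_pow,
        mul_one]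
    simp only [f, g, show k + 1 - 1 - j = k - j by omega, hsign,
      Nat.choose_symm_of_eq_add (show 2 * k + 1 = (k - j) + (k + 1 + j) by omega)]
    push_cast [hjk]
    ring_nf
  have hhigh : ∀ j ∈ range (k + 1), f (k + 1 + j) = (-1) ^ k * g j := by
    intro j _
    simp only [f, g]
    rw [show (2 * k + 1 - 2 * ((k + 1 + j : ℕ) : ℝ)) * t = -((2 * j + 1) * t) by push_cast; ring,
      sin_neg]
    ring
  have h := two_mul_neg_four_pow_mul_sin_pow_odd k t
  rw [show 2 * k + 2 = (k + 1) + (k + 1) by ring, sum_range_add, ← sum_range_reflect,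
    sum_congr rfl hlow, sum_congr rfl hhigh, ← mul_sum, neg_pow] at h
  refine mul_left_cancel₀ (mul_ne_zero two_ne_zero (pow_ne_zero k (neg_ne_zero.mpr one_ne_zero))) ?_
  linear_combination h

theorem odd_mul_four_pow_mul_sin_pow_mul_cos (k : ℕ) (t : ℝ) :
    (2 * k + 1) * (4 ^ k * sin t ^ (2 * k) * cos t) =
      ∑ j ∈ range (k + 1),
        (-1) ^ j * ((2 * k + 1).choose (k + 1 + j) : ℝ) * (2 * j + 1) * cos ((2 * j + 1) * t) := by
  have hL : HasDerivAt (fun t => 4 ^ k * sin t ^ (2 * k + 1))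
      (4 ^ k * ((2 * k + 1 : ℕ) * sin t ^ (2 * k) * cos t)) t :=
    ((hasDerivAt_sin t).pow _).const_mul _
  have hR : HasDerivAt
      (fun t => ∑ j ∈ range (k + 1),
        (-1) ^ j * ((2 * k + 1).choose (k + 1 + j) : ℝ) * sin ((2 * j + 1) * t))
      (∑ j ∈ range (k + 1),
        (-1) ^ j * ((2 * k + 1).choose (k + 1 + j) : ℝ) *
          ((2 * j + 1) * cos ((2 * j + 1) * t))) t :=
    HasDerivAt.fun_sum fun j _ =>
      ((((hasDerivAt_id' t).const_mul _).sin).congr_deriv (by ring)).const_mul _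
  rw [funext (four_pow_mul_sin_pow_odd k)] at hL
  convert hL.unique hR using 1
  · push_cast
    ring
  · simp only [mul_assoc]

theorem hasDerivAt_four_pow_mul_sin_pow_mul_cos (k : ℕ) (t : ℝ) :
    HasDerivAt (fun t => 4 ^ k * sin t ^ (2 * k) * cos t)
      (-(∑ j ∈ range (k + 1),
        (-1) ^ j * ((2 * k + 1).choose (k + 1 + j) : ℝ) * (2 * j + 1) ^ 2 * sin ((2 * j + 1) * t)) /
          (2 * k + 1)) t := by
  have hk : (2 * k + 1 : ℝ) ≠ 0 := by positivity
  have hfun : (fun t => 4 ^ k * sin t ^ (2 * k) * cos t) = fun t => (∑ j ∈ range (k + 1),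
      (-1) ^ j * ((2 * k + 1).choose (k + 1 + j) : ℝ) * (2 * j + 1) * cos ((2 * j + 1) * t)) /
        (2 * k + 1) := by
    ext t
    rw [← odd_mul_four_pow_mul_sin_pow_mul_cos, mul_div_cancel_left₀ _ hk]
  rw [hfun, ← sum_neg_distrib]
  refine (HasDerivAt.fun_sum fun j _ => ?_).div_const _
  exact ((((hasDerivAt_id' t).const_mul _).cos).const_mul _).congr_deriv (by ring)

theorem Nat.choose_div_add_one_sub {n m : ℕ} (h : m ≤ n) :
    (n.choose m : ℝ) / (n + 1 - m) = (n + 1).choose m / (n + 1) := by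
  have h' : ((n + 1 - m : ℕ) : ℝ) = n + 1 - m := by
    rw [Nat.cast_sub (by omega)]
    push_cast
    ring
  rw [div_eq_div_iff (by rw [← h']; exact (Nat.cast_pos.mpr (by omega)).ne') (by positivity), ← h']
  exact_mod_cast Nat.choose_mul_succ_eq n m

noncomputable def siSum (k : ℕ) (t : ℝ) : ℝ :=
  (-1) ^ (k + 1) * (2 * (k : ℝ) + 1) * Si ((2 * (k : ℝ) + 1) * t) +
    ∑ n ∈ Icc 1 k, (-1) ^ n * ((1 - 2 * (n : ℝ)) ^ 2 / ((k : ℝ) + 1 - n)) *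
      ((2 * k).choose (k + n) : ℝ) * Si ((2 * (n : ℝ) - 1) * t)

theorem siSum_eq (k : ℕ) (t : ℝ) :
    siSum k t = -(∑ j ∈ range (k + 1),
      (-1) ^ j * ((2 * k + 1).choose (k + 1 + j) : ℝ) * (2 * j + 1) ^ 2 * Si ((2 * j + 1) * t)) /
        (2 * k + 1) := by
  rw [siSum, ← Ico_add_one_right_eq_Icc, sum_Ico_eq_sum_range, Nat.add_sub_cancel, sum_range_succ,
    neg_add, add_div, add_comm, ← sum_neg_distrib, sum_div]
  congr 1
  · refine sum_congr rfl fun j hj => ?_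
    have hjk : k + 1 + j ≤ 2 * k := by have := mem_range.mp hj; omega
    have hcoeff := Nat.choose_div_add_one_sub hjk
    push_cast at hcoeff ⊢
    rw [show (k : ℝ) + 1 - (1 + j) = 2 * k + 1 - (k + 1 + j) by ring,
      show k + (1 + j) = k + 1 + j by ring, mul_assoc ((-1 : ℝ) ^ (1 + j)), div_mul_eq_mul_div,
      mul_div_assoc, hcoeff, show 2 * (1 + (j : ℝ)) - 1 = 2 * j + 1 by ring]
    ring
  · rw [show k + 1 + k = 2 * k + 1 by ring, Nat.choose_self]
    field_simp
    push_cast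
    ring

theorem hasDerivAt_siSum (k : ℕ) {t : ℝ} (ht : t ≠ 0) :
    HasDerivAt (siSum k)
      (-(∑ j ∈ range (k + 1),
        (-1) ^ j * ((2 * k + 1).choose (k + 1 + j) : ℝ) * (2 * j + 1) ^ 2 * sin ((2 * j + 1) * t)) /
          (2 * k + 1) / t) t := by
  rw [funext (siSum_eq k)]
  refine ((HasDerivAt.fun_sum fun j _ =>
    (hasDerivAt_Si_const_mul _ ht).const_mul _).neg.div_const _).congr_deriv ?_
  simp only [← mul_div_assoc, ← sum_div]
  ring

theorem hasDerivAt_antiderivative_pow_div_arcsin_sq (k : ℕ) :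
    ∀ x ∈ Set.Ioo (0 : ℝ) 1,
      HasDerivAt (fun x : ℝ =>
          (1 / 2 ^ (2 * k)) *
            (-(2 ^ (2 * k) * Real.sqrt (1 - x ^ 2) * x ^ (2 * k) / Real.arcsin x) +
              (-1) ^ (k + 1) * (2 * (k : ℝ) + 1) * Si ((2 * (k : ℝ) + 1) * Real.arcsin x) +
              ∑ n ∈ Finset.Icc 1 k,
                (-1) ^ n * ((1 - 2 * (n : ℝ)) ^ 2 / ((k : ℝ) + 1 - n)) *
                  ((2 * k).choose (k + n) : ℝ) * Si ((2 * (n : ℝ) - 1) * Real.arcsin x)))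
        (x ^ (2 * k) / Real.arcsin x ^ 2) x := by
  rintro x ⟨hx0, hx1⟩
  have hθ : arcsin x ≠ 0 := (arcsin_pos.mpr hx0).ne'
  have hcos : √(1 - x ^ 2) ≠ 0 := (sqrt_pos.mpr (by nlinarith)).ne'
  have hG := hasDerivAt_neg_div_add (hasDerivAt_four_pow_mul_sin_pow_mul_cos k _)
    (hasDerivAt_siSum k hθ) hθ
  have hF := (hG.comp x (hasDerivAt_arcsin (by linarith) hx1.ne)).const_mul (1 / 4 ^ k)
  have hnear : ∀ᶠ y in nhds x, y ∈ Set.Icc (-1 : ℝ) 1 := Icc_mem_nhds (by linarith) hx1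
  refine (hF.congr_of_eventuallyEq (hnear.mono fun y hy => ?_)).congr_deriv ?_
  · have h4 : (2 : ℝ) ^ (2 * k) = 4 ^ k := by rw [pow_mul]; norm_num
    simp only [Function.comp, siSum, sin_arcsin hy.1 hy.2, cos_arcsin, h4]
    ring
  · rw [sin_arcsin (by linarith) hx1.le, cos_arcsin]
    field_simp
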